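/- arXiv:2308.09498 — 6 statements merged into one kernel-verified Lean document; each statement's English description precedes it below -/
import Mathlib

section
/- For all real x, cos(2πx) ≤ 1 - 8‖x‖², where ‖x‖ denotes the distance from x to the nearest integer. -/
theorem thm3 (x : ℝ) : Real.cos (2 * Real.pi * x) ≤ 1 - 8 * |x - round x| ^ 2 := by
  set t : ℝ := x - round x with ht
  have hta : |t| ≤ 1 / 2 := abs_sub_round x
  have hpi := Real.pi_pos
  have hcos : Real.cos (2 * Real.pi * x) = Real.cos (2 * Real.pi * t) := by
    have hx : 2 * Real.pi * x = 2 * Real.pi * t + (round x : ℤ) * (2 * Real.pi) := by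
      rw [ht]; push_cast; ring
    rw [hx, Real.cos_add_int_mul_two_pi]
  have habs : Real.cos (2 * Real.pi * t) = Real.cos (2 * Real.pi * |t|) := by
    rcases abs_cases t with ⟨h, _⟩ | ⟨h, _⟩
    · rw [h]
    · rw [h]; rw [show 2 * Real.pi * -t = -(2 * Real.pi * t) by ring, Real.cos_neg]
  have hsin : 2 * |t| ≤ Real.sin (Real.pi * |t|) := by
    have h1 : 0 ≤ Real.pi * |t| := by positivity
    have h2 : Real.pi * |t| ≤ Real.pi / 2 := by
      nlinarith [abs_nonneg t]
    have := Real.mul_le_sin h1 h2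
    have hpi' : Real.pi ≠ 0 := ne_of_gt hpi
    calc 2 * |t| = 2 / Real.pi * (Real.pi * |t|) := by field_simp
      _ ≤ Real.sin (Real.pi * |t|) := this
  have hdouble : Real.cos (2 * Real.pi * |t|) = 1 - 2 * Real.sin (Real.pi * |t|) ^ 2 := by
    rw [show 2 * Real.pi * |t| = 2 * (Real.pi * |t|) by ring, Real.cos_two_mul,
      Real.cos_sq']
    ring
  rw [hcos, habs, hdouble]
  nlinarith [abs_nonneg t, sq_abs t]
end

section
/- Let x ≤ y ≤ z be real numbers and a_n ∈ ℂ for integers n with x ≤ n < z. Then |∑_{x ≤ n < y} a_n| ≤ ∫_0^1 min(⌈y⌉ - x, 1/(2‖ξ‖)) · |∑_{x ≤ n < z} a_n e(nξ)| dξ, where e(t) = exp(2πit) and ‖ξ‖ is the distance to the nearest integer. -/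
/-!
Put `S(ξ) = ∑_{x ≤ n < z} a_n e(nξ)` and `D(ξ) = ∑_{x ≤ m < y} e(-mξ)`. By orthogonality of the
characters `e(kξ)` on `[0, 1]`, `∫₀¹ S D = ∑_{x ≤ n < y} a_n`, so the left side is at most
`∫₀¹ |D| |S|`. The Dirichlet kernel `D` has at most `⌈y⌉ - x` terms of modulus one, and, being
a geometric sum with ratio `w = e(-ξ)`, it is also bounded by `2 / |w - 1| ≤ 1 / (2‖ξ‖)`, since
`|e(-ξ) - 1| = 2 |sin πξ| ≥ 4‖ξ‖`.
-/

open Finset MeasureTheory intervalIntegral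
open Complex (exp I)
open scoped Real

theorem integral_exp_two_pi_I_int_mul (k : ℤ) :
    ∫ ξ in (0:ℝ)..1, exp (2 * π * I * (k : ℝ) * (ξ : ℝ)) = if k = 0 then 1 else 0 := by
  split_ifs with hk
  · simp [hk]
  · have hc : 2 * π * I * (k : ℝ) ≠ 0 := by simp [Real.pi_ne_zero, hk]
    have hexp : exp (2 * π * I * (k : ℝ) * (1 : ℝ)) = 1 := by
      rw [show 2 * π * I * ((k : ℝ) : ℂ) * ((1 : ℝ) : ℂ) = k * (2 * π * I) by push_cast; ring]
      exact Complex.exp_int_mul_two_pi_mul_I k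
    rw [integral_exp_mul_complex hc, hexp]
    simp

theorem integral_sum_exp_mul_sum_exp_neg {s t : Finset ℤ} (hst : s ⊆ t) (a : ℤ → ℂ) :
    ∫ ξ in (0:ℝ)..1, (∑ n ∈ t, a n * exp (2 * π * I * (n : ℝ) * (ξ : ℝ))) *
        ∑ m ∈ s, exp (-(2 * π * I * (m : ℝ) * (ξ : ℝ))) = ∑ n ∈ s, a n := by
  have expand : ∀ ξ : ℝ, (∑ n ∈ t, a n * exp (2 * π * I * (n : ℝ) * (ξ : ℝ))) *
      ∑ m ∈ s, exp (-(2 * π * I * (m : ℝ) * (ξ : ℝ))) =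
      ∑ m ∈ s, ∑ n ∈ t, a n * exp (2 * π * I * ((n - m : ℤ) : ℝ) * (ξ : ℝ)) := by
    intro ξ
    rw [sum_mul_sum, sum_comm]
    refine sum_congr rfl fun m _ => sum_congr rfl fun n _ => ?_
    rw [mul_assoc, ← Complex.exp_add]
    push_cast
    ring_nf
  simp only [expand]
  rw [integral_finsetSum fun m _ => (by fun_prop : Continuous _).intervalIntegrable _ _]
  refine sum_congr rfl fun m hm => ?_
  rw [integral_finsetSum fun n _ => (by fun_prop : Continuous _).intervalIntegrable _ _]
  simp only [intervalIntegral.integral_const_mul, integral_exp_two_pi_I_int_mul, sub_eq_zero,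
    mul_ite, mul_one, mul_zero]
  exact sum_ite_eq' t m a ▸ if_pos (hst hm)

theorem sub_one_mul_sum_Ico_zpow {K : Type*} [DivisionRing K] {w : K} (hw : w ≠ 0) {c d : ℤ}
    (hcd : c ≤ d) : (w - 1) * ∑ m ∈ Ico c d, w ^ m = w ^ d - w ^ c := by
  induction d, hcd using Int.leInduction with
  | base => simp
  | succ d hcd ih =>
    rw [← insert_Ico_right_eq_Ico_add_one hcd, sum_insert right_notMem_Ico, mul_add, ih,
      zpow_add_one₀ hw, sub_one_mul, (Commute.self_zpow₀ w d).eq]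
    abel

theorem norm_sub_one_mul_norm_sum_Ico_zpow_le {K : Type*} [NormedDivisionRing K] {w : K}
    (hw : ‖w‖ = 1) (c d : ℤ) : ‖w - 1‖ * ‖∑ m ∈ Ico c d, w ^ m‖ ≤ 2 := by
  rcases le_or_gt c d with hcd | hdc
  · calc ‖w - 1‖ * ‖∑ m ∈ Ico c d, w ^ m‖ = ‖w ^ d - w ^ c‖ := by
          rw [← norm_mul, sub_one_mul_sum_Ico_zpow (norm_ne_zero_iff.mp (by simp [hw])) hcd]
      _ ≤ ‖w ^ d‖ + ‖w ^ c‖ := norm_sub_le _ _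
      _ = 2 := by rw [norm_zpow, norm_zpow, hw]; norm_num
  · simp [Ico_eq_empty_of_le hdc.le]

theorem two_mul_abs_sub_round_le_abs_sin (ξ : ℝ) : 2 * |ξ - round ξ| ≤ |Real.sin (π * ξ)| := by
  have hshift : π * ξ = π * (ξ - round ξ) + round ξ * π := by ring
  have hsmall : |π * (ξ - round ξ)| ≤ π / 2 := by
    rw [abs_mul, abs_of_pos Real.pi_pos]
    nlinarith [abs_sub_round ξ, Real.pi_pos]
  calc 2 * |ξ - round ξ| = 2 / π * |π * (ξ - round ξ)| := by
        rw [abs_mul, abs_of_pos Real.pi_pos]; field_simp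
    _ ≤ |Real.sin (π * (ξ - round ξ))| := Real.mul_abs_le_abs_sin hsmall
    _ = |Real.sin (π * ξ)| := by
        rw [hshift, Real.sin_add_int_mul_pi, abs_mul, abs_neg_one_zpow, one_mul]

theorem four_mul_abs_sub_round_le_norm_exp_neg_sub_one (ξ : ℝ) :
    4 * |ξ - round ξ| ≤ ‖exp (-(2 * π * I * (ξ : ℝ))) - 1‖ := by
  rw [show -(2 * π * I * (ξ : ℂ)) = I * ((-(2 * π * ξ) : ℝ) : ℂ) by push_cast; ring,
    Complex.norm_exp_I_mul_ofReal_sub_one, show -(2 * π * ξ) / 2 = -(π * ξ) by ring,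
    Real.sin_neg, norm_mul, Real.norm_eq_abs, Real.norm_eq_abs, abs_neg, abs_two]
  linarith [two_mul_abs_sub_round_le_abs_sin ξ]

theorem two_mul_abs_sub_round_mul_norm_sum_Ico_exp_neg_le (c d : ℤ) (ξ : ℝ) :
    2 * |ξ - round ξ| * ‖∑ m ∈ Ico c d, exp (-(2 * π * I * (m : ℝ) * (ξ : ℝ)))‖ ≤ 1 := by
  set w := exp (-(2 * π * I * (ξ : ℝ)))
  have hpow : ∀ m : ℤ, exp (-(2 * π * I * (m : ℝ) * (ξ : ℝ))) = w ^ m := fun m => by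
    rw [← Complex.exp_int_mul]; push_cast; ring_nf
  have hw : ‖w‖ = 1 := by simp [w, Complex.norm_exp]
  simp only [hpow]
  have hkernel := norm_sub_one_mul_norm_sum_Ico_zpow_le hw c d
  have hratio := four_mul_abs_sub_round_le_norm_exp_neg_sub_one ξ
  nlinarith [norm_nonneg (∑ m ∈ Ico c d, w ^ m)]

theorem norm_sum_exp_neg_le_card (s : Finset ℤ) (ξ : ℝ) :
    ‖∑ m ∈ s, exp (-(2 * π * I * (m : ℝ) * (ξ : ℝ)))‖ ≤ #s := by
  refine (norm_sum_le_of_le s fun m _ => (?_ : _ ≤ (1 : ℝ))).trans (by simp)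
  simp [Complex.norm_exp]

theorem card_Ico_ceil_le {x y : ℝ} (hxy : x ≤ y) : (#(Ico ⌈x⌉ ⌈y⌉) : ℝ) ≤ ⌈y⌉ - x := by
  rw [Int.card_Ico, ← Int.cast_natCast, Int.toNat_eq_max]
  push_cast
  exact max_le (by linarith [Int.le_ceil x]) (by linarith [Int.le_ceil y])

/-- `min L (1 / (2‖ξ‖))`, read as `L` when `‖ξ‖ = 0` (where Lean's `1 / 0` would give `0`). -/
noncomputable def dirichletWeight (L ξ : ℝ) : ℝ :=
  if |ξ - round ξ| = 0 then L else min L (1 / (2 * |ξ - round ξ|))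

theorem le_dirichletWeight {L ξ r : ℝ} (hL : r ≤ L) (h : 2 * |ξ - round ξ| * r ≤ 1) :
    r ≤ dirichletWeight L ξ := by
  unfold dirichletWeight
  split_ifs with h0
  · exact hL
  · have hpos : 0 < 2 * |ξ - round ξ| := by positivity
    exact le_min hL (by rw [le_div_iff₀ hpos]; linarith)

theorem dirichletWeight_le (L ξ : ℝ) : dirichletWeight L ξ ≤ L := by
  unfold dirichletWeight
  split_ifs
  exacts [le_rfl, min_le_left _ _]

theorem measurable_dirichletWeight (L : ℝ) : Measurable (dirichletWeight L) := by
  have hround : Measurable fun ξ : ℝ => (round ξ : ℝ) := by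
    simp only [round_eq]
    fun_prop
  have hdist : Measurable fun ξ : ℝ => |ξ - round ξ| := by fun_prop
  exact Measurable.ite (hdist (measurableSet_singleton 0)) measurable_const (by fun_prop)

theorem intervalIntegrable_dirichletWeight_mul {L a b : ℝ} (hL : 0 ≤ L) {f : ℝ → ℝ}
    (hf : Continuous f) : IntervalIntegrable (fun ξ => dirichletWeight L ξ * f ξ) volume a b := by
  have hweight : IntervalIntegrable (dirichletWeight L) volume a b := by
    refine intervalIntegrable_iff.mpr (IntegrableOn.of_bound measure_Ioc_lt_top
      (measurable_dirichletWeight L).aestronglyMeasurable L (ae_of_all _ fun ξ => ?_))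
    rw [Real.norm_eq_abs, abs_of_nonneg (le_dirichletWeight hL (by simp))]
    exact dirichletWeight_le L ξ
  exact hweight.mul_continuousOn hf.continuousOn

/-- Lemma extending a summation range via an integral (Vinogradov-type). -/
theorem thm5 (x y z : ℝ) (hxy : x ≤ y) (hyz : y ≤ z) (a : ℤ → ℂ) :
    ‖∑ n ∈ Finset.Ico ⌈x⌉ ⌈y⌉, a n‖ ≤
      ∫ ξ in (0:ℝ)..1,
        (if |ξ - round ξ| = 0 then ((⌈y⌉ : ℝ) - x)
          else min ((⌈y⌉ : ℝ) - x) (1 / (2 * |ξ - round ξ|))) *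
          ‖∑ n ∈ Finset.Ico ⌈x⌉ ⌈z⌉,
            a n * Complex.exp (2 * Real.pi * Complex.I * (n : ℝ) * (ξ : ℝ))‖ := by
  set S : ℝ → ℂ := fun ξ => ∑ n ∈ Ico ⌈x⌉ ⌈z⌉, a n * exp (2 * π * I * (n : ℝ) * (ξ : ℝ))
  set D : ℝ → ℂ := fun ξ => ∑ m ∈ Ico ⌈x⌉ ⌈y⌉, exp (-(2 * π * I * (m : ℝ) * (ξ : ℝ)))
  have hD : ∀ ξ, ‖D ξ‖ ≤ dirichletWeight (⌈y⌉ - x) ξ := fun ξ =>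
    le_dirichletWeight ((norm_sum_exp_neg_le_card _ ξ).trans (card_Ico_ceil_le hxy))
      (two_mul_abs_sub_round_mul_norm_sum_Ico_exp_neg_le _ _ ξ)
  have hL : (0 : ℝ) ≤ ⌈y⌉ - x := by linarith [Int.le_ceil y]
  have hS : Continuous S := by fun_prop
  change _ ≤ ∫ ξ in (0:ℝ)..1, dirichletWeight (⌈y⌉ - x) ξ * ‖S ξ‖
  calc ‖∑ n ∈ Ico ⌈x⌉ ⌈y⌉, a n‖ = ‖∫ ξ in (0:ℝ)..1, S ξ * D ξ‖ := by
        rw [integral_sum_exp_mul_sum_exp_neg (Ico_subset_Ico_right (Int.ceil_mono hyz))]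
    _ ≤ ∫ ξ in (0:ℝ)..1, ‖S ξ * D ξ‖ := norm_integral_le_integral_norm zero_le_one
    _ ≤ ∫ ξ in (0:ℝ)..1, dirichletWeight (⌈y⌉ - x) ξ * ‖S ξ‖ := by
        refine integral_mono_on zero_le_one
          ((hS.mul (by fun_prop : Continuous D)).norm.intervalIntegrable _ _)
          (intervalIntegrable_dirichletWeight_mul hL hS.norm) fun ξ _ => ?_
        rw [norm_mul, mul_comm]
        exact mul_le_mul_of_nonneg_right (hD ξ) (norm_nonneg _)
end

section
/- Let I be a finite interval in ℤ containing M integers and x_n ∈ ℂ for n ∈ I. Let S ⊆ ℤ be a finite nonempty set. Then |∑_{n ∈ I} x_n|² ≤ ((M + max S - min S)/|S|²) · ∑_{(s₀,s₁) ∈ S²} ∑_{n ∈ (I - s₀) ∩ (I - s₁)} x_{n+s₀} · conj(x_{n+s₁}), and moreover the right-hand side is a nonnegative real number. -/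
/-!
Extend `x` by zero outside `I` and put `y n = ∑ s ∈ S, x (n + s)`. Every shift contributes
`∑ n ∈ I, x n`, so `∑ n, y n = |S| ∑ n ∈ I, x n`, and expanding `y n * conj (y n)` shows that the
double sum `T` equals `∑ n, |y n|²`; in particular it is real and nonnegative. Since `y` is supported
on `[A - max S, B - min S]`, which has at most `M + max S - min S` points, Cauchy–Schwarz on that
interval gives the inequality.
-/

open Finset

theorem norm_sum_sq_le_card_mul_sum_norm_sq {ι E : Type*} [SeminormedAddCommGroup E]
    (s : Finset ι) (f : ι → E) : ‖∑ i ∈ s, f i‖ ^ 2 ≤ #s * ∑ i ∈ s, ‖f i‖ ^ 2 :=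
  (pow_le_pow_left₀ (norm_nonneg _) (norm_sum_le s f) 2).trans sq_sum_le_card_mul_sum_sq

section ShiftedSums

variable {G M 𝕜 : Type*} [AddCommGroup G] [AddCommMonoid M] [RCLike 𝕜]

theorem sum_indicator_add_right {I J : Finset G} {s : G} (hJ : ∀ n, n + s ∈ I → n ∈ J)
    (x : G → M) : ∑ n ∈ J, (I : Set G).indicator x (n + s) = ∑ n ∈ I, x n :=
  (sum_map J (addRightEmbedding s) _).symm.trans <|
    sum_indicator_subset x fun m hm ↦ mem_map.2 ⟨m - s, hJ _ (by simpa), by simp⟩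

noncomputable def shiftedSum (I S : Finset G) (x : G → M) (n : G) : M :=
  ∑ s ∈ S, (I : Set G).indicator x (n + s)

theorem sum_shiftedSum {I S J : Finset G} (hJ : ∀ s ∈ S, ∀ n, n + s ∈ I → n ∈ J) (x : G → M) :
    ∑ n ∈ J, shiftedSum I S x n = #S • ∑ n ∈ I, x n := by
  unfold shiftedSum
  rw [sum_comm, ← sum_const, sum_congr rfl fun s hs ↦ sum_indicator_add_right (hJ s hs) x]

theorem norm_sum_sq_mul_card_sq_le {I S J : Finset G} (hJ : ∀ s ∈ S, ∀ n, n + s ∈ I → n ∈ J)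
    (x : G → 𝕜) : ‖∑ n ∈ I, x n‖ ^ 2 * #S ^ 2 ≤ #J * ∑ n ∈ J, ‖shiftedSum I S x n‖ ^ 2 :=
  calc ‖∑ n ∈ I, x n‖ ^ 2 * #S ^ 2 = ‖∑ n ∈ J, shiftedSum I S x n‖ ^ 2 := by
        rw [sum_shiftedSum hJ, nsmul_eq_mul, norm_mul, RCLike.norm_natCast, mul_pow, mul_comm]
    _ ≤ _ := norm_sum_sq_le_card_mul_sum_norm_sq J _

variable [DecidableEq G]

theorem Finset.mem_image_sub_right_iff {I : Finset G} {s n : G} :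
    n ∈ I.image (· - s) ↔ n + s ∈ I :=
  ⟨fun h ↦ by obtain ⟨m, hm, rfl⟩ := mem_image.1 h; simpa, fun h ↦ mem_image.2 ⟨n + s, h, by simp⟩⟩

def shiftCorrelation (I S : Finset G) (x : G → 𝕜) : 𝕜 :=
  ∑ s₀ ∈ S, ∑ s₁ ∈ S, ∑ n ∈ I.image (· - s₀) ∩ I.image (· - s₁),
    x (n + s₀) * starRingEnd 𝕜 (x (n + s₁))

theorem indicator_mul_conj_indicator (I : Finset G) (x : G → 𝕜) (s₀ s₁ n : G) :
    (I : Set G).indicator x (n + s₀) * starRingEnd 𝕜 ((I : Set G).indicator x (n + s₁)) =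
      (↑(I.image (· - s₀) ∩ I.image (· - s₁)) : Set G).indicator
        (fun n ↦ x (n + s₀) * starRingEnd 𝕜 (x (n + s₁))) n := by
  simp only [Set.indicator_apply, coe_inter, Set.mem_inter_iff, mem_coe, mem_image_sub_right_iff]
  split_ifs <;> simp_all

theorem shiftCorrelation_eq_sum_mul_conj {I S J : Finset G}
    (hJ : ∀ s ∈ S, ∀ n, n + s ∈ I → n ∈ J) (x : G → 𝕜) :
    shiftCorrelation I S x =
      ∑ n ∈ J, shiftedSum I S x n * starRingEnd 𝕜 (shiftedSum I S x n) := by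
  simp only [shiftedSum, map_sum, sum_mul_sum, indicator_mul_conj_indicator]
  rw [sum_comm]
  refine sum_congr rfl fun s₀ hs₀ ↦ ?_
  rw [sum_comm]
  refine sum_congr rfl fun s₁ _ ↦ (sum_indicator_subset _ fun n hn ↦ ?_).symm
  exact hJ s₀ hs₀ n (mem_image_sub_right_iff.1 (mem_inter.1 hn).1)

theorem shiftCorrelation_eq_sum_norm_sq {I S J : Finset G}
    (hJ : ∀ s ∈ S, ∀ n, n + s ∈ I → n ∈ J) (x : G → 𝕜) :
    shiftCorrelation I S x = ((∑ n ∈ J, ‖shiftedSum I S x n‖ ^ 2 : ℝ) : 𝕜) := by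
  simp [shiftCorrelation_eq_sum_mul_conj hJ x, RCLike.mul_conj]

end ShiftedSums

theorem card_Icc_sub_le {A B a b : ℤ} (hab : a ≤ b) :
    (#(Icc (A - b) (B - a)) : ℤ) ≤ #(Icc A B) + b - a := by
  simp only [Int.card_Icc]
  omega

/-- Generalized van der Corput inequality. -/
theorem thm7 (A B : ℤ) (I : Finset ℤ) (hI : I = Finset.Icc A B) (M : ℕ)
    (hM : I.card = M) (x : ℤ → ℂ) (S : Finset ℤ) (hS : S.Nonempty)
    (T : ℂ)
    (hT : T = ∑ s₀ ∈ S, ∑ s₁ ∈ S,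
      ∑ n ∈ (I.image (· - s₀)) ∩ (I.image (· - s₁)),
        x (n + s₀) * starRingEnd ℂ (x (n + s₁))) :
    ‖∑ n ∈ I, x n‖ ^ 2 ≤
        (((M : ℝ) + ((S.max' hS : ℤ) : ℝ) - ((S.min' hS : ℤ) : ℝ)) / (S.card : ℝ) ^ 2) * T.re ∧
      T.im = 0 ∧ 0 ≤ T.re := by
  set a := S.min' hS
  set b := S.max' hS
  have hJ : ∀ s ∈ S, ∀ n, n + s ∈ I → n ∈ Icc (A - b) (B - a) := fun s hs n hn ↦ by
    have has : a ≤ s := S.min'_le s hs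
    have hsb : s ≤ b := S.le_max' s hs
    rw [hI, mem_Icc] at hn
    exact mem_Icc.2 ⟨by omega, by omega⟩
  have hcard : (#(Icc (A - b) (B - a)) : ℝ) ≤ M + b - a := by
    exact_mod_cast hM ▸ hI ▸ card_Icc_sub_le (S.min'_le_max' hS)
  obtain ⟨hre, him⟩ : T.re = ∑ n ∈ Icc (A - b) (B - a), ‖shiftedSum I S x n‖ ^ 2 ∧ T.im = 0 := by
    rw [hT.trans (shiftCorrelation_eq_sum_norm_sq hJ x)]
    exact ⟨Complex.ofReal_re _, Complex.ofReal_im _⟩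
  refine ⟨?_, him, hre ▸ by positivity⟩
  rw [hre, div_mul_eq_mul_div, le_div_iff₀ (by have := hS.card_pos; positivity)]
  exact (norm_sum_sq_mul_card_sq_le hJ x).trans (by gcongr)
end

section
/- Let λ ≥ 0, r ≥ 1, and 1 ≤ A ≤ B be integers, and let M ⊆ ℕ. Then the number of integers n ∈ [A, B) such that s^M((n+r)³) - s^M(n³) ≠ s^{M ∩ [0,λ)}((n+r)³) - s^{M ∩ [0,λ)}(n³) is at most (10/3) · r · (B²/A²) · ((B-A)·B²·2^{-λ} + 1). -/
/-- The binary sum of digits of `n` restricted to indices in the set `M`. -/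
noncomputable def sdig (M : Set ℕ) (n : ℕ) : ℕ :=
  ∑ i ∈ Finset.range (n + 1), M.indicator (fun i => n / 2 ^ i % 2) i

/-!
The digits of `x` at indices `≥ λ` are the digits of `⌊x / 2^λ⌋`, so the two differences can only
disagree at `n` when `G(n) := ⌊n³ / 2^λ⌋` jumps between `n` and `n + r`. Since `G` is monotone and
integer valued, the number of such `n ∈ [A, B)` is at most `∑_{n ∈ [A, B)} (G(n + r) - G(n))`, which
telescopes to `∑_{j < r} (G(B + j) - G(A + j))`. Each of these terms is at most
`((B + j)³ - (A + j)³) / 2^λ + 1 ≤ 3 (B - A) (B + j)² / 2^λ + 1`, and `(B + j)² ≤ B⁴ / A²` as long as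
`j ≤ 3 (B - A) / 10`. When `r` is too large for that, the trivial bound `B - A ≤ 10 r / 3` suffices.
-/

open Finset

lemma sdig_eq_sum_range (M : Set ℕ) {x N : ℕ} (h : x < N) :
    sdig M x = ∑ i ∈ range N, M.indicator (fun i => x / 2 ^ i % 2) i := by
  refine sum_subset (range_subset_range.mpr h) fun i _ hi => ?_
  have hx : x / 2 ^ i = 0 :=
    Nat.div_eq_of_lt (x.lt_two_pow_self.trans_le (Nat.pow_le_pow_right two_pos (by simp at hi; omega)))
  simp [hx]

lemma sdig_inter_add_sdig_diff (M S : Set ℕ) (x : ℕ) :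
    sdig (M ∩ S) x + sdig (M \ S) x = sdig M x := by
  classical
  conv_rhs => rw [sdig, ← Set.inter_union_sdiff M S,
    Set.indicator_union_of_disjoint Set.disjoint_sdiff_inter.symm]
  exact sum_add_distrib.symm

lemma sdig_eq_of_div_eq {N : Set ℕ} {lam x y : ℕ} (hN : ∀ i ∈ N, lam ≤ i)
    (h : x / 2 ^ lam = y / 2 ^ lam) : sdig N x = sdig N y := by
  rw [sdig_eq_sum_range N (Nat.lt_succ_of_le (le_max_left x y)),
    sdig_eq_sum_range N (Nat.lt_succ_of_le (le_max_right x y))]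
  refine sum_congr rfl fun i _ => ?_
  by_cases hi : i ∈ N
  · have hsplit (z : ℕ) : z / 2 ^ i = z / 2 ^ lam / 2 ^ (i - lam) := by
      rw [Nat.div_div_eq_div_mul, ← pow_add, Nat.add_sub_cancel' (hN i hi)]
    simp [Set.indicator_of_mem hi, hsplit x, hsplit y, h]
  · simp [Set.indicator_of_notMem hi]

lemma sdig_sub_eq_of_div_eq (M : Set ℕ) {lam x y : ℕ} (h : x / 2 ^ lam = y / 2 ^ lam) :
    (sdig M x : ℤ) - sdig M y = (sdig (M ∩ Set.Ico 0 lam) x : ℤ) - sdig (M ∩ Set.Ico 0 lam) y := by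
  have hhigh : sdig (M \ Set.Ico 0 lam) x = sdig (M \ Set.Ico 0 lam) y :=
    sdig_eq_of_div_eq (fun i hi => by simpa using hi.2) h
  rw [← sdig_inter_add_sdig_diff M (Set.Ico 0 lam) x, ← sdig_inter_add_sdig_diff M (Set.Ico 0 lam) y,
    hhigh]
  push_cast
  ring

lemma sum_Ico_sub_shift {G : Type*} [AddCommGroup G] (F : ℕ → G) (r : ℕ) {A B : ℕ} (hAB : A ≤ B) :
    ∑ n ∈ Ico A B, (F (n + r) - F n) = ∑ j ∈ range r, (F (B + j) - F (A + j)) := by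
  induction B, hAB using Nat.le_induction with
  | base => simp
  | succ B hAB ih =>
    have hstep : ∑ j ∈ range r, (F (B + 1 + j) - F (B + j)) = F (B + r) - F B := by
      refine (sum_congr rfl fun j _ => ?_).trans (sum_range_sub (fun j => F (B + j)) r)
      simp only [add_right_comm B 1 j, add_assoc]
    rw [sum_Ico_succ_top hAB, ih, ← hstep, ← sum_add_distrib]
    exact sum_congr rfl fun j _ => by abel

lemma card_filter_ne_shift_le {G : ℕ → ℤ} (hG : Monotone G) (r : ℕ) {A B : ℕ} (hAB : A ≤ B) :
    (((Ico A B).filter fun n => G n ≠ G (n + r)).card : ℤ) ≤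
      ∑ j ∈ range r, (G (B + j) - G (A + j)) := by
  rw [← sum_Ico_sub_shift G r hAB, card_eq_sum_ones, Nat.cast_sum, Nat.cast_one, sum_filter]
  refine sum_le_sum fun n _ => ?_
  have hle : G n ≤ G (n + r) := hG (Nat.le_add_right n r)
  split_ifs with hne
  · exact Int.sub_pos_of_lt (lt_of_le_of_ne hle hne)
  · exact sub_nonneg.mpr hle

lemma natCast_div_sub_natCast_div_le (m n d : ℕ) :
    ((n / d : ℕ) : ℝ) - (m / d : ℕ) ≤ ((n : ℝ) - m) / d + 1 := by
  rw [← Nat.floor_div_eq_div (K := ℝ), ← Nat.floor_div_eq_div (K := ℝ), sub_div]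
  have := Nat.floor_le (by positivity : (0 : ℝ) ≤ n / d)
  have := Nat.lt_floor_add_one ((m : ℝ) / d)
  linarith

lemma cube_sub_cube_le {a b x : ℝ} (ha : 0 < a) (hab : a ≤ b) (hx : 0 ≤ x)
    (h : a * x ≤ b * (b - a)) : (b + x) ^ 3 - (a + x) ^ 3 ≤ 3 * (b - a) * b ^ 4 / a ^ 2 := by
  have hkey : a * (b + x) ≤ b ^ 2 := by linarith
  have hsq : (a * (b + x)) ^ 2 ≤ (b ^ 2) ^ 2 := pow_le_pow_left₀ (mul_nonneg ha.le (by linarith)) hkey 2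
  have hfactor : (b + x) ^ 3 - (a + x) ^ 3 ≤ 3 * (b - a) * (b + x) ^ 2 :=
    calc (b + x) ^ 3 - (a + x) ^ 3 = (b - a) * ((b + x) ^ 2 + (b + x) * (a + x) + (a + x) ^ 2) := by
          ring
      _ ≤ (b - a) * (3 * (b + x) ^ 2) := by
          gcongr
          nlinarith [mul_le_mul_of_nonneg_left hab (by linarith : 0 ≤ b + x),
            mul_le_mul_of_nonneg_left hab (by linarith : 0 ≤ a + x)]
      _ = 3 * (b - a) * (b + x) ^ 2 := by ring
  rw [le_div_iff₀ (by positivity)]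
  nlinarith [mul_le_mul_of_nonneg_left hsq (by linarith : 0 ≤ 3 * (b - a))]

lemma cube_div_two_pow_sub_le (lam : ℕ) {A B j : ℕ} (hA : 0 < A) (hAB : A ≤ B)
    (hj : (A : ℝ) * j ≤ B * (B - A)) :
    ((((B + j) ^ 3 / 2 ^ lam : ℕ) : ℝ) - ((A + j) ^ 3 / 2 ^ lam : ℕ)) ≤
      3 * ((B : ℝ) ^ 2 / A ^ 2) * (((B : ℝ) - A) * B ^ 2 / 2 ^ lam) + 1 := by
  have hcube := cube_sub_cube_le (x := j) (Nat.cast_pos.mpr hA) (Nat.cast_le.mpr hAB) j.cast_nonneg hj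
  calc ((((B + j) ^ 3 / 2 ^ lam : ℕ) : ℝ) - ((A + j) ^ 3 / 2 ^ lam : ℕ))
      ≤ (((B : ℝ) + j) ^ 3 - (A + j) ^ 3) / 2 ^ lam + 1 := by
        exact_mod_cast natCast_div_sub_natCast_div_le ((A + j) ^ 3) ((B + j) ^ 3) (2 ^ lam)
    _ ≤ 3 * ((B : ℝ) - A) * B ^ 4 / A ^ 2 / 2 ^ lam + 1 := by gcongr
    _ = 3 * ((B : ℝ) ^ 2 / A ^ 2) * (((B : ℝ) - A) * B ^ 2 / 2 ^ lam) + 1 := by ring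

open Classical in
theorem thm12_general (lam r A B : ℕ) (hA : 1 ≤ A) (hAB : A ≤ B) (M : Set ℕ) :
    (((Finset.Ico A B).filter fun n =>
        (sdig M ((n + r) ^ 3) : ℤ) - (sdig M (n ^ 3) : ℤ) ≠
          (sdig (M ∩ Set.Ico 0 lam) ((n + r) ^ 3) : ℤ) -
            (sdig (M ∩ Set.Ico 0 lam) (n ^ 3) : ℤ)).card : ℝ) ≤
      (10 / 3) * (r : ℝ) * ((B : ℝ) ^ 2 / (A : ℝ) ^ 2) *
        (((B : ℝ) - A) * (B : ℝ) ^ 2 / 2 ^ lam + 1) := by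
  set G : ℕ → ℤ := fun n => (n ^ 3 / 2 ^ lam : ℕ)
  have hG : Monotone G := fun m n hmn => by
    simp only [G, Nat.cast_le]; exact Nat.div_le_div_right (Nat.pow_le_pow_left hmn 3)
  have hAB' : (A : ℝ) ≤ B := Nat.cast_le.mpr hAB
  set q : ℝ := (B : ℝ) ^ 2 / A ^ 2
  set X : ℝ := ((B : ℝ) - A) * B ^ 2 / 2 ^ lam
  have hq : 1 ≤ q := by
    rw [one_le_div (by positivity)]; gcongr
  have hX : 0 ≤ X := by
    have := sub_nonneg.mpr hAB'; positivity
  rcases le_or_gt ((B : ℝ) - A) (10 / 3 * r) with hsmall | hlarge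
  · calc _ ≤ ((Finset.Ico A B).card : ℝ) := Nat.cast_le.mpr (card_filter_le _ _)
      _ = (B : ℝ) - A := by rw [Nat.card_Ico, Nat.cast_sub hAB]
      _ ≤ 10 / 3 * r := hsmall
      _ ≤ 10 / 3 * r * (q * (X + 1)) :=
          le_mul_of_one_le_right (by positivity) (one_le_mul_of_one_le_of_one_le hq (by linarith))
      _ = _ := by ring
  · have hcount := card_filter_ne_shift_le hG r hAB
    calc _ ≤ (((Ico A B).filter fun n => G n ≠ G (n + r)).card : ℝ) :=
          Nat.cast_le.mpr <| card_le_card <| monotone_filter_right _ fun n _ hne heq =>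
            hne (sdig_sub_eq_of_div_eq M (Nat.cast_inj.mp heq).symm)
      _ ≤ ∑ j ∈ range r, ((G (B + j) - G (A + j) : ℤ) : ℝ) := by exact_mod_cast hcount
      _ ≤ ∑ _j ∈ range r, (3 * q * X + 1) := by
          refine sum_le_sum fun j hj => ?_
          have hjr : (j : ℝ) ≤ r := by exact_mod_cast (mem_range.mp hj).le
          push_cast [G]
          exact cube_div_two_pow_sub_le lam hA hAB (by nlinarith)
      _ ≤ r * (10 / 3 * q * (X + 1)) := by
          rw [sum_const, card_range, nsmul_eq_mul]
          gcongr
          nlinarith [mul_nonneg (by linarith : (0 : ℝ) ≤ q) hX]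
      _ = _ := by ring

open Classical in
/-- Carry lemma, second part. -/
theorem thm12 (lam r A B : ℕ) (hr : 1 ≤ r) (hA : 1 ≤ A) (hAB : A ≤ B) (M : Set ℕ) :
    (((Finset.Ico A B).filter fun n =>
        (sdig M ((n + r) ^ 3) : ℤ) - (sdig M (n ^ 3) : ℤ) ≠
          (sdig (M ∩ Set.Ico 0 lam) ((n + r) ^ 3) : ℤ) -
            (sdig (M ∩ Set.Ico 0 lam) (n ^ 3) : ℤ)).card : ℝ) ≤
      (10 / 3) * (r : ℝ) * ((B : ℝ) ^ 2 / (A : ℝ) ^ 2) *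
        (((B : ℝ) - A) * (B : ℝ) ^ 2 / 2 ^ lam + 1) :=
  thm12_general lam r A B hA hAB M
end

section
/- Let I ⊆ ℤ be a finite interval and T, V ≥ 1 integers with T·V ≤ |I|. Then there exists a partition 𝒫 of I such that every P ∈ 𝒫 is of the form (Tℤ + a) ∩ [x, y] for some integers a and x, y ∈ I, and V/2 ≤ |P| ≤ V. -/
private lemma chunk_exists (b : ℕ → ℕ) (h0 : b 0 = 0) :
    ∀ q k, k < b q → ∃ c < q, b c ≤ k ∧ k < b (c + 1) := by
  intro q
  induction q with
  | zero => intro k hk; omega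
  | succ q ih =>
    intro k hk
    by_cases h : k < b q
    · obtain ⟨c, hc, h1, h2⟩ := ih k h
      exact ⟨c, by omega, h1, h2⟩
    · exact ⟨q, by omega, by omega, hk⟩

private lemma size_formula (m q c : ℕ) (hq : 0 < q) :
    (c + 1) * m / q = c * m / q + (c * m % q + m) / q := by
  have h1 : (c + 1) * m = q * (c * m / q) + (c * m % q + m) := by
    have := Nat.div_add_mod (c * m) q
    have h2 : (c + 1) * m = c * m + m := by ring
    linarith
  rw [h1, Nat.mul_add_div hq]

private lemma m_le_qV (V m : ℕ) (hV : 1 ≤ V) : m ≤ (m + V - 1) / V * V := by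
  have h := Nat.div_add_mod (m + V - 1) V
  have h2 : (m + V - 1) % V < V := Nat.mod_lt _ (by omega)
  have h3 : m + V - 1 + 1 = m + V := by omega
  rw [mul_comm]
  linarith

private lemma key_lemma (V m : ℕ) (hV : 1 ≤ V) (hm : V ≤ m) :
    (m + V - 1) / V * ((V + 1) / 2) ≤ m := by
  obtain ⟨s, hs⟩ : ∃ s, m / V = s := ⟨_, rfl⟩
  obtain ⟨r, hr⟩ : ∃ r, m % V = r := ⟨_, rfl⟩
  have hmod0 : s * V + r = m := by rw [mul_comm, ← hs, ← hr]; exact Nat.div_add_mod m V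
  have hrV : r < V := hr ▸ Nat.mod_lt _ (by omega)
  obtain ⟨X, hX⟩ : ∃ X, s * V = X := ⟨_, rfl⟩
  have hmod : X + r = m := by rw [← hX]; exact hmod0
  obtain ⟨W, hW⟩ : ∃ W, (V + 1) / 2 = W := ⟨_, rfl⟩
  have hW2 : 2 * W ≤ V + 1 := by omega
  have hWV : W ≤ V := by omega
  rw [hW]
  have hq : (m + V - 1) / V = if r = 0 then s else s + 1 := by
    rcases Nat.eq_zero_or_pos r with h | h
    · have e : m + V - 1 = V - 1 + s * V := by rw [hX]; omega
      rw [e, Nat.add_mul_div_right _ _ (by omega : 0 < V), Nat.div_eq_of_lt (by omega)]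
      simp [h]
    · have e : m + V - 1 = (r - 1 + V) + s * V := by rw [hX]; omega
      rw [e, Nat.add_mul_div_right _ _ (by omega : 0 < V),
        Nat.add_div_right _ (by omega : 0 < V), Nat.div_eq_of_lt (by omega)]
      have hne : ¬ r = 0 := by omega
      simp only [hne, if_false]
      omega
  rw [hq]
  rcases Nat.eq_zero_or_pos r with h | h
  · simp only [h, if_pos]
    calc s * W ≤ s * V := Nat.mul_le_mul_left _ hWV
    _ ≤ m := by rw [hX]; omega
  · have hne : ¬ r = 0 := by omega
    simp only [hne, if_false]
    have hs1 : 1 ≤ s := by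
      by_contra hc
      have h0 : s = 0 := by omega
      rw [h0, zero_mul] at hmod0
      omega
    have h1 : ((s:ℤ) + 1) * (W:ℤ) ≤ (s:ℤ) * V + r := by
      have c1 : (1:ℤ) ≤ (s:ℤ) := by exact_mod_cast hs1
      have c2 : (1:ℤ) ≤ (r:ℤ) := by exact_mod_cast h
      have c3 : (1:ℤ) ≤ (V:ℤ) := by exact_mod_cast hV
      have c4 : 2 * (W:ℤ) ≤ (V:ℤ) + 1 := by exact_mod_cast hW2
      nlinarith [mul_nonneg (by linarith : (0:ℤ) ≤ (s:ℤ) + 1) (by linarith : (0:ℤ) ≤ (V:ℤ) + 1 - 2 * W),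
        mul_nonneg (by linarith : (0:ℤ) ≤ (s:ℤ) - 1) (by linarith : (0:ℤ) ≤ (V:ℤ) - 1)]
    have h2 : ((s:ℤ)) * V + (r:ℤ) = (m:ℤ) := by exact_mod_cast hmod0
    have h3 := h1.trans_eq h2
    exact_mod_cast h3

private lemma ap_eq (a : ℤ) (T : ℕ) (hT : 0 < T) (lo hi : ℕ) (h : lo < hi) :
    (Finset.Ico lo hi).image (fun k : ℕ => a + (T : ℤ) * k) =
      (Finset.Icc (a + T * lo) (a + T * (hi - 1 : ℕ))).filter
        (fun n => (T : ℤ) ∣ n - a) := by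
  have hTZ : (0:ℤ) < (T:ℤ) := by exact_mod_cast hT
  ext n
  simp only [Finset.mem_image, Finset.mem_filter, Finset.mem_Icc, Finset.mem_Ico]
  constructor
  · rintro ⟨k, ⟨hk1, hk2⟩, rfl⟩
    have hk3 : (lo : ℤ) ≤ k := by exact_mod_cast hk1
    have hk4 : (k : ℤ) ≤ ((hi - 1 : ℕ) : ℤ) := by exact_mod_cast (by omega : k ≤ hi - 1)
    refine ⟨⟨by nlinarith, by nlinarith⟩, ⟨k, by ring⟩⟩
  · rintro ⟨⟨h1, h2⟩, d, hd⟩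
    have hd' : n = a + (T:ℤ) * d := by linarith [hd ▸ (by ring : n - a = n - a)]
    have hlo : (lo : ℤ) ≤ d := by
      by_contra hc
      push_neg at hc
      nlinarith
    have hhi : d ≤ ((hi - 1 : ℕ) : ℤ) := by
      by_contra hc
      push_neg at hc
      nlinarith
    have hd0 : 0 ≤ d := le_trans (by positivity) hlo
    refine ⟨d.toNat, ⟨?_, ?_⟩, ?_⟩
    · exact_mod_cast (Int.toNat_of_nonneg hd0) ▸ hlo
    · have : ((hi - 1 : ℕ) : ℤ) < hi := by
        have : 1 ≤ hi := by omega
        push_cast [Nat.cast_sub this]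
        omega
      have : d < (hi : ℤ) := lt_of_le_of_lt hhi this
      omega
    · rw [hd']
      congr 1
      rw [Int.toNat_of_nonneg hd0]
private def mf (N T j : ℕ) : ℕ := (N - 1 - j) / T + 1
private def qf (N T V j : ℕ) : ℕ := (mf N T j + V - 1) / V
private def bf (N T V j c : ℕ) : ℕ := c * mf N T j / qf N T V j

private lemma L1 (N T V j : ℕ) (hT : 1 ≤ T) (hV : 1 ≤ V) (hTV : T * V ≤ N) (hj : j < T) :
    V ≤ mf N T j := by
  have hTN : T ≤ N := le_trans (Nat.le_mul_of_pos_right _ hV) hTV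
  have h1 : (V - 1) * T ≤ N - 1 - j := by
    have e : (V - 1) * T + T = V * T := by
      obtain ⟨v, rfl⟩ : ∃ v, V = v + 1 := ⟨V - 1, by omega⟩
      simp only [Nat.add_sub_cancel]
      ring
    have comm : V * T = T * V := mul_comm _ _
    have hS : N - 1 - j + 1 + j = N := by omega
    linarith
  have h2 : V - 1 ≤ (N - 1 - j) / T := (Nat.le_div_iff_mul_le hT).mpr h1
  unfold mf
  have : V ≤ V - 1 + 1 := by omega
  exact le_trans this (Nat.add_le_add_right h2 1)

private lemma L2 (N T V j : ℕ) (hT : 1 ≤ T) (hV : 1 ≤ V) (hTV : T * V ≤ N) (hj : j < T) :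
    0 < qf N T V j := by
  have h1 := L1 N T V j hT hV hTV hj
  unfold qf
  exact Nat.div_pos (by omega) (by omega)

private lemma L3 (N T V j : ℕ) : bf N T V j 0 = 0 := by simp [bf]

private lemma L4 (N T V j : ℕ) (hT : 1 ≤ T) (hV : 1 ≤ V) (hTV : T * V ≤ N) (hj : j < T) :
    bf N T V j (qf N T V j) = mf N T j := by
  unfold bf
  exact Nat.mul_div_cancel_left _ (L2 N T V j hT hV hTV hj)

private lemma L5 (N T V j c c' : ℕ) (h : c ≤ c') : bf N T V j c ≤ bf N T V j c' := by
  unfold bf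
  exact Nat.div_le_div_right (Nat.mul_le_mul_right _ h)

private lemma L6 (N T V j c : ℕ) (hT : 1 ≤ T) (hV : 1 ≤ V) (hTV : T * V ≤ N) (hj : j < T) :
    V ≤ 2 * (bf N T V j (c + 1) - bf N T V j c) ∧
      bf N T V j (c + 1) - bf N T V j c ≤ V ∧
      bf N T V j c < bf N T V j (c + 1) := by
  have hm1 : V ≤ mf N T j := L1 N T V j hT hV hTV hj
  have hq1 : 0 < qf N T V j := L2 N T V j hT hV hTV hj
  obtain ⟨M, hM⟩ : ∃ M, mf N T j = M := ⟨_, rfl⟩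
  obtain ⟨Q, hQ⟩ : ∃ Q, qf N T V j = Q := ⟨_, rfl⟩
  have hQ0 : 0 < Q := hQ ▸ hq1
  have hMV : V ≤ M := hM ▸ hm1
  have hbf : ∀ d, bf N T V j d = d * M / Q := fun d => by unfold bf; rw [hM, hQ]
  have hsz : bf N T V j (c + 1) = bf N T V j c + (c * M % Q + M) / Q := by
    rw [hbf, hbf]; exact size_formula M Q c hQ0
  have eQ : (M + V - 1) / V = Q := by rw [← hQ]; unfold qf; rw [hM]
  have hup : (c * M % Q + M) / Q ≤ V := by
    have h1 : c * M % Q < Q := Nat.mod_lt _ hQ0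
    have h2 : M ≤ Q * V := by
      have h3 := m_le_qV V M hV
      rw [eQ] at h3
      exact h3
    have h3 : c * M % Q + M < (V + 1) * Q := by
      have e2 : (V + 1) * Q = Q * V + Q := by ring
      linarith
    have h4 : (c * M % Q + M) / Q < V + 1 := (Nat.div_lt_iff_lt_mul hQ0).mpr h3
    omega
  have hlo : (V + 1) / 2 ≤ (c * M % Q + M) / Q := by
    rw [Nat.le_div_iff_mul_le hQ0]
    have h2 : Q * ((V + 1) / 2) ≤ M := by
      have h3 := key_lemma V M hV hMV
      rw [eQ] at h3
      exact h3
    have comm : (V + 1) / 2 * Q = Q * ((V + 1) / 2) := mul_comm _ _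
    omega
  refine ⟨by omega, by omega, by omega⟩

private lemma L7 (N T j k : ℕ) (hT : 1 ≤ T) (hjN : j + 1 ≤ N) (hk : k < mf N T j) :
    j + T * k ≤ N - 1 := by
  have hk' : k ≤ (N - 1 - j) / T := by
    unfold mf at hk
    exact Nat.lt_succ_iff.mp hk
  have h1 : T * k ≤ T * ((N - 1 - j) / T) := Nat.mul_le_mul_left _ hk'
  have h2 : (N - 1 - j) / T * T ≤ N - 1 - j := Nat.div_mul_le_self _ _
  have h3 : T * ((N - 1 - j) / T) = (N - 1 - j) / T * T := mul_comm _ _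
  have h4 : N - 1 - j + j = N - 1 := by omega
  linarith

private lemma coverage (N T : ℕ) (hT : 1 ≤ T) (t : ℕ) (ht : t < N) :
    ∃ j < T, ∃ k, k < mf N T j ∧ t = j + T * k := by
  refine ⟨t % T, Nat.mod_lt _ hT, t / T, ?_, ?_⟩
  · unfold mf
    have h2 : t % T + T * (t / T) = t := Nat.mod_add_div t T
    have h1 : t / T ≤ (N - 1 - t % T) / T := by
      rw [Nat.le_div_iff_mul_le hT] at *
      have comm : t / T * T = T * (t / T) := mul_comm _ _
      omega
    omega
  · exact (Nat.mod_add_div t T).symm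

private lemma rep_unique (A : ℤ) (T j j' k k' : ℕ) (hj : j < T) (hj' : j' < T)
    (h : A + (j : ℤ) + (T : ℤ) * k = A + (j' : ℤ) + (T : ℤ) * k') : j = j' ∧ k = k' := by
  have hT0 : 0 < T := by omega
  have hTZ : ((T : ℤ)) ≠ 0 := by exact_mod_cast hT0.ne'
  have h2 : (j : ℤ) + (T : ℤ) * k = (j' : ℤ) + (T : ℤ) * k' := by linarith
  have e1 : ((j : ℤ) + (T : ℤ) * (k : ℤ)) % (T : ℤ) = j := by
    rw [Int.add_mul_emod_self_left]
    exact Int.emod_eq_of_lt (by positivity) (by exact_mod_cast hj)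
  have e2 : ((j' : ℤ) + (T : ℤ) * (k' : ℤ)) % (T : ℤ) = j' := by
    rw [Int.add_mul_emod_self_left]
    exact Int.emod_eq_of_lt (by positivity) (by exact_mod_cast hj')
  have hjj : (j : ℤ) = j' := by rw [← e1, ← e2, h2]
  have hj3 : j = j' := by exact_mod_cast hjj
  refine ⟨hj3, ?_⟩
  have h4 : (T : ℤ) * k = (T : ℤ) * k' := by rw [hjj] at h2; linarith
  have h5 : (k : ℤ) = k' := mul_left_cancel₀ hTZ h4
  exact_mod_cast h5

private lemma mem_AP {a : ℤ} {T lo hi : ℕ} {n : ℤ} :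
    n ∈ (Finset.Ico lo hi).image (fun k : ℕ => a + (T : ℤ) * k) ↔
      ∃ k : ℕ, lo ≤ k ∧ k < hi ∧ a + (T : ℤ) * k = n := by
  simp [Finset.mem_image, Finset.mem_Ico, and_assoc]

private lemma card_AP (a : ℤ) (T lo hi : ℕ) (hT : 0 < T) :
    ((Finset.Ico lo hi).image (fun k : ℕ => a + (T : ℤ) * k)).card = hi - lo := by
  have hTZ : ((T : ℤ)) ≠ 0 := by exact_mod_cast hT.ne'
  have hinj : Function.Injective (fun k : ℕ => a + (T : ℤ) * k) := by
    intro k k' h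
    simp only at h
    have h4 : (T : ℤ) * k = (T : ℤ) * k' := by linarith
    have h5 : (k : ℤ) = k' := mul_left_cancel₀ hTZ h4
    exact_mod_cast h5
  rw [Finset.card_image_of_injective _ hinj, Nat.card_Ico]
open Classical in
/-- Decomposition of an interval into short arithmetic progressions. -/
theorem thm13 (A B : ℤ) (I : Finset ℤ) (hI : I = Finset.Icc A B) (T V : ℕ)
    (hT : 1 ≤ T) (hV : 1 ≤ V) (hTV : T * V ≤ I.card) :
    ∃ parts : Finset (Finset ℤ),
      (parts : Set (Finset ℤ)).PairwiseDisjoint id ∧ parts.sup id = I ∧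
      ∀ P ∈ parts,
        (∃ a x y : ℤ, x ∈ I ∧ y ∈ I ∧
            P = (Finset.Icc x y).filter fun n => (T : ℤ) ∣ (n - a)) ∧
        (V : ℝ) / 2 ≤ (P.card : ℝ) ∧ P.card ≤ V := by
  classical
  have hT0 : 0 < T := hT
  obtain ⟨N, hN⟩ : ∃ N, I.card = N := ⟨_, rfl⟩
  have hTVN : T * V ≤ N := hN ▸ hTV
  have hN1 : 1 ≤ N := le_trans (Nat.mul_pos hT0 hV) hTVN
  have hTN : T ≤ N := le_trans (Nat.le_mul_of_pos_right _ hV) hTVN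
  have hAB : A ≤ B := by
    have hne : I.Nonempty := Finset.card_pos.mp (by omega)
    obtain ⟨x, hx⟩ := hne
    rw [hI, Finset.mem_Icc] at hx
    linarith [hx.1, hx.2]
  have hNB : (N : ℤ) = B - A + 1 := by
    rw [← hN, hI, Int.card_Icc, Int.toNat_of_nonneg (by linarith)]; ring
  have hmemI : ∀ n : ℤ, n ∈ I ↔ A ≤ n ∧ n ≤ B := fun n => by rw [hI, Finset.mem_Icc]
  set piece : ℕ → ℕ → Finset ℤ := fun j c =>
    (Finset.Ico (bf N T V j c) (bf N T V j (c + 1))).image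
      (fun k : ℕ => (A + (j : ℤ)) + (T : ℤ) * k) with hpiece
  have hmem : ∀ j c (n : ℤ), n ∈ piece j c ↔
      ∃ k : ℕ, bf N T V j c ≤ k ∧ k < bf N T V j (c + 1) ∧ (A + (j : ℤ)) + (T : ℤ) * k = n :=
    fun j c n => mem_AP
  -- pieces are contained in I
  have hsub : ∀ j < T, ∀ c < qf N T V j, piece j c ⊆ I := by
    intro j hj c hc n hn
    rw [hmem] at hn
    obtain ⟨k, hk1, hk2, rfl⟩ := hn
    have hkm : k < mf N T j := by
      have h1 : bf N T V j (c + 1) ≤ bf N T V j (qf N T V j) := L5 N T V j _ _ (by omega)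
      rw [L4 N T V j hT hV hTVN hj] at h1
      omega
    have h7 : j + T * k ≤ N - 1 := L7 N T j k hT (by omega) hkm
    have h7' : ((j + T * k : ℕ) : ℤ) ≤ ((N - 1 : ℕ) : ℤ) := by exact_mod_cast h7
    rw [hmemI]
    constructor
    · have : (0 : ℤ) ≤ (j : ℤ) + (T : ℤ) * k := by positivity
      linarith
    · push_cast at h7'
      have hNc : ((N - 1 : ℕ) : ℤ) = (N : ℤ) - 1 := by
        have : 1 ≤ N := hN1
        omega
      rw [hNc] at h7'
      linarith [hNB]
  -- disjointness of distinct pieces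
  have hdisj : ∀ j, j < T → ∀ j', j' < T → ∀ c c', ¬(j = j' ∧ c = c') →
      Disjoint (piece j c) (piece j' c') := by
    intro j hj j' hj' c c' hne
    rw [Finset.disjoint_left]
    intro n hn hn'
    rw [hmem] at hn hn'
    obtain ⟨k, hk1, hk2, hk3⟩ := hn
    obtain ⟨k', hk1', hk2', hk3'⟩ := hn'
    have heq : A + (j : ℤ) + (T : ℤ) * k = A + (j' : ℤ) + (T : ℤ) * k' := by
      rw [hk3, hk3']
    obtain ⟨rfl, rfl⟩ := rep_unique A T j j' k k' hj hj' heq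
    rcases Nat.lt_trichotomy c c' with h | h | h
    · have : bf N T V j (c + 1) ≤ bf N T V j c' := L5 N T V j _ _ (by omega)
      omega
    · exact hne ⟨rfl, h⟩
    · have : bf N T V j (c' + 1) ≤ bf N T V j c := L5 N T V j _ _ (by omega)
      omega
  refine ⟨(Finset.range T).biUnion (fun j => (Finset.range (qf N T V j)).image (piece j)),
    ?_, ?_, ?_⟩
  · -- pairwise disjoint
    intro P hP Q hQ hPQ
    simp only [Finset.mem_coe, Finset.mem_biUnion, Finset.mem_range,
      Finset.mem_image] at hP hQ
    obtain ⟨j, hj, c, hc, rfl⟩ := hP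
    obtain ⟨j', hj', c', hc', rfl⟩ := hQ
    have hne : ¬(j = j' ∧ c = c') := by
      rintro ⟨rfl, rfl⟩
      exact hPQ rfl
    exact hdisj j hj j' hj' c c' hne
  · -- sup = I
    apply le_antisymm
    · apply Finset.sup_le
      intro P hP
      simp only [Finset.mem_biUnion, Finset.mem_range, Finset.mem_image] at hP
      obtain ⟨j, hj, c, hc, rfl⟩ := hP
      exact hsub j hj c hc
    · intro n hn
      rw [Finset.mem_sup]
      rw [hmemI] at hn
      obtain ⟨t, ht⟩ : ∃ t : ℕ, (t : ℤ) = n - A := ⟨(n - A).toNat, Int.toNat_of_nonneg (by linarith [hn.1])⟩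
      have htN : t < N := by
        have : (t : ℤ) < N := by rw [hNB]; linarith [hn.2]
        exact_mod_cast this
      obtain ⟨j, hj, k, hkm, hteq⟩ := coverage N T hT t htN
      have hkq : k < bf N T V j (qf N T V j) := by rw [L4 N T V j hT hV hTVN hj]; exact hkm
      obtain ⟨c, hc, hbc1, hbc2⟩ := chunk_exists (fun c => bf N T V j c) (L3 N T V j) _ k hkq
      refine ⟨piece j c, ?_, ?_⟩
      · simp only [Finset.mem_biUnion, Finset.mem_range, Finset.mem_image]
        exact ⟨j, hj, c, hc, rfl⟩
      · show n ∈ piece j c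
        rw [hmem]
        refine ⟨k, hbc1, hbc2, ?_⟩
        have : ((j + T * k : ℕ) : ℤ) = n - A := by rw [← hteq, ht]
        push_cast at this
        linarith
  · -- properties of each part
    intro P hP
    simp only [Finset.mem_biUnion, Finset.mem_range, Finset.mem_image] at hP
    obtain ⟨j, hj, c, hc, rfl⟩ := hP
    obtain ⟨hs1, hs2, hs3⟩ := L6 N T V j c hT hV hTVN hj
    obtain ⟨lo, hlo⟩ : ∃ lo, bf N T V j c = lo := ⟨_, rfl⟩
    obtain ⟨hi, hhi⟩ : ∃ hi, bf N T V j (c + 1) = hi := ⟨_, rfl⟩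
    rw [hlo, hhi] at hs1 hs2 hs3
    have hpc : piece j c = (Finset.Ico lo hi).image (fun k : ℕ => (A + (j : ℤ)) + (T : ℤ) * k) := by
      rw [hpiece]; simp only [hlo, hhi]
    constructor
    · refine ⟨A + (j : ℤ), (A + (j : ℤ)) + (T : ℤ) * lo, (A + (j : ℤ)) + (T : ℤ) * ((hi - 1 : ℕ)), ?_, ?_, ?_⟩
      · apply hsub j hj c hc
        rw [hmem]
        exact ⟨lo, by omega, by omega, rfl⟩
      · apply hsub j hj c hc
        rw [hmem]
        exact ⟨hi - 1, by omega, by omega, rfl⟩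
      · rw [hpc, ap_eq (A + (j : ℤ)) T hT0 lo hi hs3]
    · have hcard : (piece j c).card = hi - lo := by
        rw [hpc, card_AP _ _ _ _ hT0]
      constructor
      · rw [hcard]
        have h1 : (V : ℝ) ≤ 2 * ((hi - lo : ℕ) : ℝ) := by exact_mod_cast hs1
        linarith
      · rw [hcard]; omega
end

section
/- Let ℓ, κ ≥ 1 be integers with μ := ℓ - 4κ - 4 ≥ 0. Say ω ∈ ℕ has property P if for every ω₀ ∈ {0, …, 2^μ - 1} there exists an odd integer M with 1 ≤ M < 2^{5κ+7} such that all binary digits of M·(2^μ·ω + ω₀) at indices in [ℓ-κ, ℓ) are zero. Then the number of ω ∈ {0, …, 2^{4κ+4} - 1} with property P is at least 2^{3κ+4}·(2^κ - 1). -/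
/-!
Write N = 2^ℓ and n = 2^μ ω + ω₀; the digits of M n in [ℓ - κ, ℓ) vanish iff M n mod N < 2^(ℓ-κ).
By Dirichlet's approximation theorem there are q ≤ 2^(κ+1) and k with |2qn - kN| < 2^(ℓ-κ-1).
If r := 2qn - kN has |r| ≥ 2^(μ+κ), the progression n + i r, whose steps are shorter than the
window [0, 2^(ℓ-κ)), enters it modulo N for some i ≤ 2^(3κ+4) + 1, and M = 2qi + 1 < 2^(5κ+7) is
odd with M n ≡ n + i r. Otherwise |r| < 2^(μ+κ), and dividing by 2^μ shows that 2qω lies within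
2^κ + 2q of a multiple of 2^(4κ+4). For each q at most 2^(κ+4) residues ω < 2^(4κ+4) do so, so at
most 2^(2κ+5) ≤ 2^(3κ+4) values of ω fail property P.
-/

open Finset

theorem div_mod_eq_zero_iff_mod_mul_lt {c : ℕ} (d x : ℕ) (hc : 0 < c) :
    x / c % d = 0 ↔ x % (c * d) < c := by
  rw [← Nat.mod_mul_right_div_self, Nat.div_eq_zero_iff_lt hc]

theorem exists_abs_mul_sub_mul_lt (x : ℤ) {a b : ℕ} (ha : 0 < a) (hb : 0 < b) :
    ∃ q : ℕ, 0 < q ∧ q ≤ b ∧ ∃ k : ℤ, |q * x - k * (a * b)| < a := by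
  obtain ⟨k, q, hq0, hqb, h⟩ := Real.exists_int_int_abs_mul_sub_le ((x : ℝ) / (a * b)) hb
  lift q to ℕ using hq0.le
  refine ⟨q, by exact_mod_cast hq0, by exact_mod_cast hqb, k, ?_⟩
  have hab : (0 : ℝ) < a * b := by positivity
  have : |(q * x - k * (a * b) : ℝ)| < a := calc
    |(q * x - k * (a * b) : ℝ)| = |(a * b : ℝ) * (q * (x / (a * b)) - k)| := by
        congr 1; field_simp
    _ = a * b * |q * ((x : ℝ) / (a * b)) - k| := by rw [abs_mul, abs_of_pos hab]
    _ ≤ a * b * (1 / (b + 1)) := by gcongr; exact_mod_cast h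
    _ < a := by
        rw [mul_one_div, div_lt_iff₀ (by positivity)]
        nlinarith [(Nat.cast_pos.2 ha : (0 : ℝ) < a)]
  exact_mod_cast this

-- Steps of length at most W cannot jump over the window [0, W) modulo N.
theorem exists_add_mul_emod_lt {N W d r : ℤ} (n : ℤ) (hN : 0 < N) (hd : 0 < d) (hdr : d ≤ |r|)
    (hrW : |r| ≤ W) : ∃ i : ℕ, i ≤ N / d + 1 ∧ (n + i * r) % N < W := by
  have hquot : ∀ x, 0 ≤ x → x ≤ N →
      ∃ t : ℕ, (t : ℤ) ≤ N / d ∧ t * |r| ≤ x ∧ x < t * |r| + |r| := by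
    intro x hx0 hxN
    have hr : 0 < |r| := hd.trans_le hdr
    lift x / |r| to ℕ using Int.ediv_nonneg hx0 hr.le with t ht
    have hdiv := Int.mul_ediv_add_emod x |r|
    have hmod := Int.emod_lt_of_pos x hr
    have hmod0 := Int.emod_nonneg x hr.ne'
    rw [← ht] at hdiv
    refine ⟨t, Int.le_ediv_of_mul_le hd ?_, by linarith, by linarith⟩
    nlinarith [mul_le_mul_of_nonneg_left hdr (Int.natCast_nonneg t)]
  have hn0 := Int.emod_nonneg n hN.ne'
  have hnN := Int.emod_lt_of_pos n hN
  simp_rw [← Int.emod_add_emod n N]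
  by_cases hnW : n % N < W
  · exact ⟨0, by have := Int.ediv_nonneg hN.le hd.le; omega, by simpa using hnW⟩
  rcases lt_or_gt_of_ne (abs_pos.1 (hd.trans_le hdr)) with hr | hr
  · obtain ⟨t, htN, ht⟩ := hquot (n % N - W) (by omega) (by omega)
    refine ⟨t + 1, by push_cast; omega, ?_⟩
    rw [abs_of_neg hr] at ht hrW
    rw [Int.emod_eq_of_lt] <;> push_cast <;> linarith
  · obtain ⟨t, htN, ht⟩ := hquot (N - 1 - n % N) (by omega) (by omega)
    refine ⟨t + 1, by push_cast; omega, ?_⟩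
    rw [abs_of_pos hr] at ht hrW
    rw [← Int.sub_mul_emod_self_right _ 1 N, Int.emod_eq_of_lt] <;> push_cast <;> linarith

theorem exists_odd_mul_mod_lt_or_abs_sub_lt (n : ℕ) {a b W d : ℕ} (ha : 0 < a) (hb : 0 < b)
    (haW : a ≤ W) (hd : 0 < d) :
    (∃ M, M % 2 = 1 ∧ M ≤ 2 * b * (a * b / d + 1) + 1 ∧ M * n % (a * b) < W) ∨
      ∃ q, 0 < q ∧ q ≤ b ∧ ∃ k : ℤ, |q * (2 * n) - k * (a * b)| < d := by
  obtain ⟨q, hq0, hqb, k, hk⟩ := exists_abs_mul_sub_mul_lt (2 * n) ha hb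
  by_cases hr : (d : ℤ) ≤ |q * (2 * n) - k * (a * b)|
  · left
    obtain ⟨i, hi, hmod⟩ := exists_add_mul_emod_lt (N := a * b) (W := W) n
      (by positivity) (by exact_mod_cast hd) hr (hk.le.trans (by exact_mod_cast haW))
    rw [← Nat.cast_mul, ← Int.natCast_ediv] at hi
    have hi : i ≤ a * b / d + 1 := by exact_mod_cast hi
    refine ⟨2 * (q * i) + 1, by omega, by rw [mul_assoc 2 b]; gcongr, ?_⟩
    have hM : ((2 * (q * i) + 1) * n : ℤ) =
        n + i * (q * (2 * n) - k * (a * b)) + i * k * (a * b) := by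
      ring
    zify
    rwa [hM, Int.add_mul_emod_self_right]
  · exact .inr ⟨q, hq0, hqb, k, not_le.1 hr⟩

theorem add_mod_lt_of_abs_mul_add_sub_lt {c m y e D q : ℕ} {k : ℤ}
    (he : e < c * q) (h : |c * y + e - k * (c * m)| < c * D) :
    (y + (D + q)) % m < 2 * D + q := by
  obtain ⟨hlo, hhi⟩ := abs_lt.mp h
  have hlo : -((D + q : ℕ) : ℤ) < y - k * m := by
    refine lt_of_mul_lt_mul_left ?_ (Int.natCast_nonneg c)
    push_cast
    linarith [(by exact_mod_cast he : (e : ℤ) < c * q)]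
  have hhi : (y - k * m : ℤ) < D := by
    refine lt_of_mul_lt_mul_left ?_ (Int.natCast_nonneg c)
    linarith [Int.natCast_nonneg e]
  obtain ⟨j, hj⟩ : ∃ j : ℕ, (j : ℤ) = y + (D + q) - k * m :=
    ⟨_, Int.toNat_of_nonneg (by omega)⟩
  zify
  rw [← Int.sub_mul_emod_self_right _ k, ← hj, ← Int.natCast_mod]
  have := Nat.mod_le j m
  omega

theorem card_filter_mul_add_mod_lt_le (m q t L : ℕ) :
    #{ω ∈ range m | (q * ω + t) % m < L} ≤ L + m.gcd q := by
  rcases m.eq_zero_or_pos with rfl | hm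
  · simp
  set g := m.gcd q
  have hg : 0 < g := Nat.gcd_pos_of_pos_left q hm
  have hm' : 0 < m / g := Nat.div_pos (Nat.gcd_le_left q hm) hg
  have hgm : g ∣ m := Nat.gcd_dvd_left m q
  have hres : ∀ ω, (q * ω + t) % m % g = t % g := by
    intro ω
    obtain ⟨q', hq'⟩ : g ∣ q := Nat.gcd_dvd_right m q
    rw [Nat.mod_mod_of_dvd _ hgm, hq', mul_assoc, add_comm, Nat.add_mul_mod_self_left]
  -- `(q * ω + t) % m ≡ t [MOD g]` is recovered from its quotient by `g`, and determines
  -- `ω` modulo `m / g`.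
  calc #{ω ∈ range m | (q * ω + t) % m < L}
      ≤ #(range (L / g + 1) ×ˢ range g) := by
        refine card_le_card_of_injOn (fun ω => ((q * ω + t) % m / g, ω / (m / g))) ?_ ?_
        · intro ω hω
          obtain ⟨hωm, hωL⟩ := mem_filter.1 (mem_coe.1 hω)
          rw [mem_coe, mem_product, mem_range, mem_range]
          refine ⟨Nat.lt_succ_of_le (Nat.div_le_div_right hωL.le), ?_⟩
          rw [Nat.div_lt_iff_lt_mul hm', Nat.mul_div_cancel' hgm]
          exact mem_range.1 hωm
        · intro ω₁ _ ω₂ _ h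
          simp only [Prod.mk.injEq] at h
          have heq : (q * ω₁ + t) % m = (q * ω₂ + t) % m := by
            rw [← Nat.div_add_mod ((q * ω₁ + t) % m) g,
              ← Nat.div_add_mod ((q * ω₂ + t) % m) g, hres, hres, h.1]
          have hmod : ω₁ ≡ ω₂ [MOD m / g] :=
            (Nat.ModEq.add_right_cancel' t heq).cancel_left_div_gcd hm
          rw [← Nat.div_add_mod ω₁ (m / g), ← Nat.div_add_mod ω₂ (m / g), h.2, hmod]
    _ = (L / g + 1) * g := by rw [card_product, card_range, card_range]
    _ ≤ L + g := by
        rw [add_mul, one_mul]; exact Nat.add_le_add_right (Nat.div_mul_le_self L g) g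

/-- `(x + s) % m < L` encodes `x mod m ∈ [-s, L - s)`: here `2 q ω` lies in `[-2^κ - 2q, 2^κ)`
modulo `2^(4κ+4)`. -/
def exceptionalSet (κ : ℕ) : Finset ℕ :=
  {ω ∈ range (2 ^ (4 * κ + 4)) | ∃ q ∈ Icc (1 : ℕ) (2 ^ (κ + 1)),
    (2 * q * ω + (2 ^ κ + 2 * q)) % 2 ^ (4 * κ + 4) < 2 * 2 ^ κ + 2 * q}

theorem card_exceptionalSet_le (κ : ℕ) : #(exceptionalSet κ) ≤ 2 ^ (κ + 1) * 2 ^ (κ + 4) := by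
  unfold exceptionalSet
  calc _ ≤ #((Icc 1 (2 ^ (κ + 1))).biUnion fun q => {ω ∈ range (2 ^ (4 * κ + 4)) |
          (2 * q * ω + (2 ^ κ + 2 * q)) % 2 ^ (4 * κ + 4) < 2 * 2 ^ κ + 2 * q}) := by
        refine card_le_card fun ω hω => ?_
        obtain ⟨hω, q, hq, hqω⟩ := mem_filter.1 hω
        exact mem_biUnion.2 ⟨q, hq, mem_filter.2 ⟨hω, hqω⟩⟩
    _ ≤ #(Icc 1 (2 ^ (κ + 1))) * 2 ^ (κ + 4) := by
        refine card_biUnion_le_card_mul _ _ _ fun q hq => ?_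
        obtain ⟨hq0, hqb⟩ := mem_Icc.1 hq
        have hgcd := Nat.gcd_le_right (m := 2 ^ (4 * κ + 4)) (n := 2 * q) (by omega)
        have := card_filter_mul_add_mod_lt_le (2 ^ (4 * κ + 4)) (2 * q) (2 ^ κ + 2 * q)
          (2 * 2 ^ κ + 2 * q)
        have : 2 ^ (κ + 4) = 16 * 2 ^ κ := by ring
        have : 2 ^ (κ + 1) = 2 * 2 ^ κ := by ring
        omega
    _ = 2 ^ (κ + 1) * 2 ^ (κ + 4) := by rw [Nat.card_Icc, Nat.add_sub_cancel]

theorem mem_exceptionalSet_of_forall_odd_div_mod_ne_zero {κ μ ω ω₀ : ℕ}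
    (hω : ω < 2 ^ (4 * κ + 4)) (hω₀ : ω₀ < 2 ^ μ)
    (h : ∀ M, M % 2 = 1 → 1 ≤ M → M < 2 ^ (5 * κ + 7) →
      M * (2 ^ μ * ω + ω₀) / 2 ^ (μ + 3 * κ + 4) % 2 ^ κ ≠ 0) :
    ω ∈ exceptionalSet κ := by
  unfold exceptionalSet
  refine mem_filter.2 ⟨mem_range.2 hω, ?_⟩
  have hN : 2 ^ (μ + 3 * κ + 3) * 2 ^ (κ + 1) = 2 ^ (μ + 3 * κ + 4) * 2 ^ κ := by ring
  rcases exists_odd_mul_mod_lt_or_abs_sub_lt (2 ^ μ * ω + ω₀) (a := 2 ^ (μ + 3 * κ + 3))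
    (b := 2 ^ (κ + 1)) (W := 2 ^ (μ + 3 * κ + 4)) (d := 2 ^ μ * 2 ^ κ) (by positivity)
    (by positivity) (Nat.pow_le_pow_right two_pos (by omega)) (by positivity) with
    ⟨M, hodd, hMle, hM⟩ | ⟨q, hq0, hqb, k, hk⟩
  · have hquot : 2 ^ (μ + 3 * κ + 3) * 2 ^ (κ + 1) / (2 ^ μ * 2 ^ κ) = 2 ^ (3 * κ + 4) := by
      rw [Nat.div_eq_of_eq_mul_left (by positivity)]; ring
    have hMlt : M < 2 ^ (5 * κ + 7) := by
      rw [hquot] at hMle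
      have : 2 ^ (κ + 2) < 2 ^ (4 * κ + 6) := Nat.pow_lt_pow_right one_lt_two (by omega)
      have : 2 ^ (4 * κ + 7) ≤ 2 ^ (5 * κ + 7) := Nat.pow_le_pow_right two_pos (by omega)
      have : 2 * 2 ^ (κ + 1) * (2 ^ (3 * κ + 4) + 1) + 1 =
          2 ^ (4 * κ + 6) + 2 ^ (κ + 2) + 1 := by ring
      have : 2 ^ (4 * κ + 7) = 2 * 2 ^ (4 * κ + 6) := by ring
      omega
    rw [hN] at hM
    exact absurd ((div_mod_eq_zero_iff_mod_mul_lt _ _ (by positivity)).2 hM)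
      (h M hodd (by omega) hMlt)
  · refine ⟨q, mem_Icc.2 ⟨hq0, hqb⟩, add_mod_lt_of_abs_mul_add_sub_lt (c := 2 ^ μ) (k := k)
      (e := 2 * q * ω₀) ?_ ?_⟩
    · calc 2 * q * ω₀ < 2 * q * 2 ^ μ := by gcongr
        _ = 2 ^ μ * (2 * q) := by ring
    · convert hk using 3 <;> push_cast <;> ring

open Classical in
theorem thm14_general (ℓ κ μ : ℕ) (hκ : 1 ≤ κ) (hμ : μ + (4 * κ + 4) = ℓ) :
    2 ^ (3 * κ + 4) * (2 ^ κ - 1) ≤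
      ((Finset.range (2 ^ (4 * κ + 4))).filter fun ω =>
        ∀ ω₀ < 2 ^ μ, ∃ M, M % 2 = 1 ∧ 1 ≤ M ∧ M < 2 ^ (5 * κ + 7) ∧
          (M * (2 ^ μ * ω + ω₀)) / 2 ^ (ℓ - κ) % 2 ^ κ = 0).card := by
  subst hμ
  rw [show μ + (4 * κ + 4) - κ = μ + 3 * κ + 4 by omega]
  have hsmall : 2 ^ (κ + 1) * 2 ^ (κ + 4) ≤ 2 ^ (3 * κ + 4) := by
    rw [← pow_add]; exact Nat.pow_le_pow_right two_pos (by omega)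
  calc 2 ^ (3 * κ + 4) * (2 ^ κ - 1) = #(range (2 ^ (4 * κ + 4))) - 2 ^ (3 * κ + 4) := by
        rw [card_range, Nat.mul_sub, mul_one, ← pow_add]; ring_nf
    _ ≤ #(range (2 ^ (4 * κ + 4))) - #(exceptionalSet κ) :=
        Nat.sub_le_sub_left ((card_exceptionalSet_le κ).trans hsmall) _
    _ ≤ #(range (2 ^ (4 * κ + 4)) \ exceptionalSet κ) := le_card_sdiff _ _
    _ ≤ _ := card_le_card fun ω hω => ?_
  obtain ⟨hωs, hωE⟩ := mem_sdiff.1 hω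
  refine mem_filter.2 ⟨hωs, fun ω₀ hω₀ => by_contra fun hM => hωE ?_⟩
  push Not at hM
  exact mem_exceptionalSet_of_forall_odd_div_mod_ne_zero (mem_range.1 hωs) hω₀ hM

open Classical in
/-- Odd elimination lemma. -/
theorem thm14 (ℓ κ μ : ℕ) (hℓ : 1 ≤ ℓ) (hκ : 1 ≤ κ) (hμ : μ + (4 * κ + 4) = ℓ) :
    2 ^ (3 * κ + 4) * (2 ^ κ - 1) ≤
      ((Finset.range (2 ^ (4 * κ + 4))).filter fun ω =>
        ∀ ω₀ < 2 ^ μ, ∃ M, M % 2 = 1 ∧ 1 ≤ M ∧ M < 2 ^ (5 * κ + 7) ∧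
          (M * (2 ^ μ * ω + ω₀)) / 2 ^ (ℓ - κ) % 2 ^ κ = 0).card :=
  thm14_general ℓ κ μ hκ hμ
end
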